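/- arXiv:2502.02140 — 3 statements merged into one kernel-verified Lean document; each statement's English description precedes it below -/
import Mathlib

section
/- Let $\mathcal{A}$ be a measurable space, $f, g : \mathcal{A} \to [0,\infty)$ integrable functions, and $\mathbb{Q}$ a probability measure on $\mathcal{A}$. Then there exist points $a_1, a_2 \in \mathcal{A}$ and $q \in [0,1]$ such that $q f(a_1) + (1-q) f(a_2) \le \int f \, d\mathbb{Q}$ and $q g(a_1) + (1-q) g(a_2) \le \int g \, d\mathbb{Q}$. -/
/-!
Centre `f` and `g` to `u` and `w`. If no two-point mixture of the points `(u a, w a)` lies in the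
closed negative quadrant, a line `t * u + (1 - t) * w = 0` with `t ∈ [0, 1]` separates all of them
from that quadrant. Then `t * u + (1 - t) * w` is nonnegative with zero mean, hence vanishes a.e.,
and since `u - w` also has zero mean, that line carries points on either side of the origin; a
mixture of two of them is the origin itself.
-/

open MeasureTheory Set

section

variable {A : Type*}

def HasNonposMixture (u w : A → ℝ) : Prop :=
  ∃ a₁ a₂ : A, ∃ q : ℝ, 0 ≤ q ∧ q ≤ 1 ∧
    q * u a₁ + (1 - q) * u a₂ ≤ 0 ∧ q * w a₁ + (1 - q) * w a₂ ≤ 0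

namespace HasNonposMixture

variable {u w : A → ℝ}

theorem of_nonpos {a : A} (hu : u a ≤ 0) (hw : w a ≤ 0) : HasNonposMixture u w :=
  ⟨a, a, 1, zero_le_one, le_rfl, by simpa using hu, by simpa using hw⟩

/-- The segment from `(u b, w b)` to `(u c, w c)` crosses the axis `w = 0` at
`u = (w b * u c - w c * u b) / (w b - w c)`. -/
theorem of_cross_le {b c : A} (hub : u b ≤ 0) (hwc : w c ≤ 0)
    (hcross : w b * u c ≤ w c * u b) : HasNonposMixture u w := by
  rcases le_or_gt (w b) 0 with hwb | hwb
  · exact of_nonpos hub hwb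
  have hden : 0 < w b - w c := by linarith
  refine ⟨b, c, -w c / (w b - w c), div_nonneg (by linarith) hden.le,
    (div_le_one hden).mpr (by linarith), ?_, le_of_eq ?_⟩
  · have hsplit : -w c / (w b - w c) * u b + (1 - -w c / (w b - w c)) * u c
        = (w b * u c - w c * u b) / (w b - w c) := by
      field_simp
      ring
    rw [hsplit]
    exact div_nonpos_of_nonpos_of_nonneg (by linarith) hden.le
  · field_simp
    ring

/-- Along the line `t * u + (1 - t) * w = 0`, `u = (1 - t) * (u - w)` and `w = -t * (u - w)`. -/
theorem of_mem_line {t : ℝ} {a a' : A} (ha : t * u a + (1 - t) * w a = 0)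
    (ha' : t * u a' + (1 - t) * w a' = 0) (hs : u a - w a ≤ 0) (hs' : 0 ≤ u a' - w a') :
    HasNonposMixture u w := by
  have hmem : (0 : ℝ) ∈ segment ℝ (u a - w a) (u a' - w a') := by
    rw [segment_eq_Icc (hs.trans hs')]
    exact ⟨hs, hs'⟩
  obtain ⟨q, r, hq, hr, hqr, hsum⟩ := hmem
  obtain rfl : r = 1 - q := by linarith
  simp only [smul_eq_mul] at hsum
  exact ⟨a, a', q, hq, by linarith,
    le_of_eq (by linear_combination q * ha + (1 - q) * ha' + (1 - t) * hsum),
    le_of_eq (by linear_combination q * ha + (1 - q) * ha' - t * hsum)⟩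

end HasNonposMixture

/-- Point `a` lies on the nonnegative side of `t * u + (1 - t) * w = 0` for `t` on one side of
`w a / (w a - u a)`: below it when `u a ≤ 0`, above it when `w a ≤ 0`. Without a nonpositive
mixture the thresholds of `{w ≤ 0}` all lie below those of `{u ≤ 0}`, and `t` is taken in between. -/
theorem exists_forall_nonneg_of_not_hasNonposMixture {u w : A → ℝ} (h : ¬HasNonposMixture u w) :
    ∃ t ∈ Icc (0 : ℝ) 1, ∀ a, 0 ≤ t * u a + (1 - t) * w a := by
  have hpos : ∀ a, 0 < u a ∨ 0 < w a := fun a => by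
    by_contra! ha
    exact h (.of_nonpos ha.1 ha.2)
  have hcross : ∀ b c, u b ≤ 0 → w c ≤ 0 → w c * u b < w b * u c := fun b c hb hc => by
    by_contra! hbc
    exact h (.of_cross_le hb hc hbc)
  set ρ : A → ℝ := fun a => w a / (w a - u a)
  have hρ_le {b c : A} (hb : u b ≤ 0) (hc : w c ≤ 0) : ρ c ≤ ρ b := by
    have hwb := (hpos b).resolve_left hb.not_gt
    have huc := (hpos c).resolve_right hc.not_gt
    rw [div_le_iff_of_neg (by linarith), div_mul_eq_mul_div, div_le_iff₀ (by linarith)]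
    nlinarith [hcross b c hb hc]
  set S : Set ℝ := insert 0 (ρ '' {c | w c ≤ 0})
  have hS : ∀ s ∈ S, s ≤ 1 := by
    rintro s (rfl | ⟨c, hc, rfl⟩)
    · exact zero_le_one
    · have huc := (hpos c).resolve_right hc.not_gt
      rw [div_le_one_of_neg (by linarith [show w c ≤ 0 from hc])]
      linarith
  have hSbdd : BddAbove S := ⟨1, hS⟩
  have ht0 : 0 ≤ sSup S := le_csSup hSbdd (mem_insert _ _)
  have ht1 : sSup S ≤ 1 := csSup_le (insert_nonempty _ _) hS
  refine ⟨sSup S, ⟨ht0, ht1⟩, fun a => ?_⟩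
  rcases le_or_gt (u a) 0 with hua | hua
  · have hwa := (hpos a).resolve_left hua.not_gt
    have hle : sSup S ≤ ρ a := by
      refine csSup_le (insert_nonempty _ _) ?_
      rintro s (rfl | ⟨c, hc, rfl⟩)
      · exact div_nonneg hwa.le (by linarith)
      · exact hρ_le hua hc
    rw [le_div_iff₀ (by linarith)] at hle
    nlinarith
  rcases le_or_gt (w a) 0 with hwa | hwa
  · have hle : ρ a ≤ sSup S := le_csSup hSbdd (mem_insert_of_mem _ ⟨a, hwa, rfl⟩)
    rw [div_le_iff_of_neg (by linarith)] at hle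
    nlinarith
  · nlinarith [mul_nonneg ht0 hua.le, mul_nonneg (sub_nonneg.mpr ht1) hwa.le]

theorem hasNonposMixture_of_integral_eq_zero [MeasurableSpace A] {Q : Measure A}
    [IsProbabilityMeasure Q] {u w : A → ℝ} (hu : Integrable u Q) (hw : Integrable w Q)
    (hu0 : ∫ a, u a ∂Q = 0) (hw0 : ∫ a, w a ∂Q = 0) : HasNonposMixture u w := by
  by_contra h
  obtain ⟨t, -, hφ⟩ := exists_forall_nonneg_of_not_hasNonposMixture h
  have hφint : Integrable (fun a => t * u a + (1 - t) * w a) Q :=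
    (hu.const_mul t).add (hw.const_mul (1 - t))
  have hφ0 : ∫ a, t * u a + (1 - t) * w a ∂Q = 0 := by
    rw [integral_add (hu.const_mul t) (hw.const_mul (1 - t)), integral_const_mul,
      integral_const_mul, hu0, hw0]
    ring
  have hnull : Q {a | t * u a + (1 - t) * w a ≠ 0} = 0 :=
    ae_iff.mp ((integral_eq_zero_iff_of_nonneg hφ hφint).mp hφ0)
  have hs0 : ∫ a, u a - w a ∂Q = 0 := by rw [integral_sub hu hw, hu0, hw0, sub_zero]
  obtain ⟨a, ha, has⟩ := exists_notMem_null_le_integral (hu.sub hw) hnull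
  obtain ⟨a', ha', has'⟩ := exists_notMem_null_integral_le (hu.sub hw) hnull
  simp only [mem_ofPred_eq, not_not] at ha ha'
  exact h (.of_mem_line ha ha' (hs0 ▸ has) (hs0 ▸ has'))

end

theorem two_point_compression_general
    {A : Type*} [MeasurableSpace A]
    (Q : Measure A) [IsProbabilityMeasure Q]
    (f g : A → ℝ)
    (hf : Integrable f Q) (hg : Integrable g Q) :
    ∃ a₁ a₂ : A, ∃ q : ℝ, 0 ≤ q ∧ q ≤ 1 ∧
      q * f a₁ + (1 - q) * f a₂ ≤ ∫ a, f a ∂Q ∧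
      q * g a₁ + (1 - q) * g a₂ ≤ ∫ a, g a ∂Q := by
  have hcentred {h : A → ℝ} (hh : Integrable h Q) : ∫ a, h a - ∫ x, h x ∂Q ∂Q = 0 := by
    rw [integral_sub hh (integrable_const _), integral_const, probReal_univ, one_smul, sub_self]
  obtain ⟨a₁, a₂, q, hq0, hq1, hfq, hgq⟩ :=
    hasNonposMixture_of_integral_eq_zero (hf.sub (integrable_const _))
      (hg.sub (integrable_const _)) (hcentred hf) (hcentred hg)
  simp only [Pi.sub_apply] at hfq hgq
  exact ⟨a₁, a₂, q, hq0, hq1, by linarith, by linarith⟩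

/-- Proposition 1: simultaneous two-point compression. -/
theorem two_point_compression
    {A : Type*} [MeasurableSpace A] [Nonempty A]
    (Q : Measure A) [IsProbabilityMeasure Q]
    (f g : A → ℝ) (hf0 : ∀ a, 0 ≤ f a) (hg0 : ∀ a, 0 ≤ g a)
    (hf : Integrable f Q) (hg : Integrable g Q) :
    ∃ a₁ a₂ : A, ∃ q : ℝ, 0 ≤ q ∧ q ≤ 1 ∧
      q * f a₁ + (1 - q) * f a₂ ≤ ∫ a, f a ∂Q ∧
      q * g a₁ + (1 - q) * g a₂ ≤ ∫ a, g a ∂Q :=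
  two_point_compression_general Q f g hf hg
end

section
/- Let $\mathcal{A}$ be a nonempty finite set, $f, g : \mathcal{A} \to [0,\infty)$, and $\mathbb{Q}$ a probability mass function on $\mathcal{A}$. Then there exist $a_1, a_2 \in \mathcal{A}$ and $q \in [0,1]$ with $q f(a_1) + (1-q) f(a_2) \le \sum_a f(a)\mathbb{Q}(a)$ and $q g(a_1) + (1-q) g(a_2) \le \sum_a g(a)\mathbb{Q}(a)$. -/
/-! Centre the data, `u = f - F` and `v = g - G`, so that the `Q`-averages of `u` and `v` vanish
and the task is to find a segment between two points `(u a, v a)` meeting the closed negative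
quadrant. If no single point lies in it, every point with `u a ≤ 0` has `v a > 0`; among those
take `a` with the least slope `t = u a / v a`. The line `u = t v` then leaves every point with
`v > 0` on the side `u - t v ≥ 0`, and since `u - t v` still has nonpositive average, some `b`
with `v b ≤ 0` lies on the other side; the segment from `a` to `b` crosses `v = 0` at a point
with `u ≤ 0`. -/

open Finset

theorem exists_convex_comb_nonpos_of_mul_le_mul {x₁ y₁ x₂ y₂ : ℝ} (hy₁ : 0 < y₁) (hy₂ : y₂ ≤ 0)
    (h : y₁ * x₂ ≤ x₁ * y₂) :
    ∃ q : ℝ, 0 ≤ q ∧ q ≤ 1 ∧ q * x₁ + (1 - q) * x₂ ≤ 0 ∧ q * y₁ + (1 - q) * y₂ ≤ 0 := by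
  have hd : 0 < y₁ - y₂ := by linarith
  -- the weight at which the `y`-combination vanishes
  refine ⟨-y₂ / (y₁ - y₂), div_nonneg (by linarith) hd.le,
    (div_le_one hd).2 (by linarith), ?_, le_of_eq ?_⟩
  · have hx : -y₂ / (y₁ - y₂) * x₁ + (1 - -y₂ / (y₁ - y₂)) * x₂
        = (y₁ * x₂ - x₁ * y₂) / (y₁ - y₂) := by
      field_simp; ring
    rw [hx]
    exact div_nonpos_of_nonpos_of_nonneg (by linarith) hd.le
  · field_simp; ring

section WeightedSums

variable {A : Type*} [Fintype A] {Q : A → ℝ}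

theorem exists_pos_and_nonpos_of_sum_mul_nonpos (hQ0 : ∀ a, 0 ≤ Q a) (hQ : 0 < ∑ a, Q a)
    {w : A → ℝ} (hw : ∑ a, w a * Q a ≤ 0) : ∃ a, 0 < Q a ∧ w a ≤ 0 := by
  by_contra! hpos
  obtain ⟨a, -, ha⟩ := exists_lt_of_sum_lt (f := fun _ => (0 : ℝ)) (by simpa using hQ)
  have hterm : ∀ b, 0 ≤ w b * Q b := fun b =>
    (hQ0 b).eq_or_lt.elim (fun h => by simp [← h]) fun h => (mul_pos (hpos b h) h).le
  have : 0 < ∑ a, w a * Q a :=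
    sum_pos' (fun b _ => hterm b) ⟨a, mem_univ a, mul_pos (hpos a ha) ha⟩
  linarith

theorem exists_nonpos_and_nonpos_of_nonneg_of_pos (hQ0 : ∀ a, 0 ≤ Q a) (hQ : 0 < ∑ a, Q a)
    {φ v : A → ℝ} (hφ : ∑ a, φ a * Q a ≤ 0) (hv : ∑ a, v a * Q a ≤ 0)
    (hφv : ∀ a, 0 < v a → 0 ≤ φ a) : ∃ b, φ b ≤ 0 ∧ v b ≤ 0 := by
  by_contra! hne
  have hφ0 : ∀ a, 0 ≤ φ a := fun a => (le_or_gt (φ a) 0).elim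
    (fun h => hφv a (hne a h)) le_of_lt
  obtain ⟨a, hQa, hva⟩ := exists_pos_and_nonpos_of_sum_mul_nonpos hQ0 hQ hv
  have hφa : 0 < φ a := lt_of_not_ge fun h => (hne a h).not_ge hva
  have : 0 < ∑ a, φ a * Q a :=
    sum_pos' (fun b _ => mul_nonneg (hφ0 b) (hQ0 b)) ⟨a, mem_univ a, mul_pos hφa hQa⟩
  linarith

theorem exists_two_point_convex_comb_nonpos (hQ0 : ∀ a, 0 ≤ Q a) (hQ : 0 < ∑ a, Q a)
    {u v : A → ℝ} (hu : ∑ a, u a * Q a ≤ 0) (hv : ∑ a, v a * Q a ≤ 0) :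
    ∃ a₁ a₂ : A, ∃ q : ℝ, 0 ≤ q ∧ q ≤ 1 ∧
      q * u a₁ + (1 - q) * u a₂ ≤ 0 ∧ q * v a₁ + (1 - q) * v a₂ ≤ 0 := by
  classical
  by_cases hsingle : ∃ a, u a ≤ 0 ∧ v a ≤ 0
  · obtain ⟨a, hua, hva⟩ := hsingle
    exact ⟨a, a, 1, zero_le_one, le_rfl, by simpa using hua, by simpa using hva⟩
  push Not at hsingle
  obtain ⟨a₀, -, hua₀⟩ := exists_pos_and_nonpos_of_sum_mul_nonpos hQ0 hQ hu
  obtain ⟨a, haP, hmin⟩ := (univ.filter (u · ≤ 0)).exists_min_image (fun a => u a / v a)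
    ⟨a₀, by simpa using hua₀⟩
  have hua : u a ≤ 0 := by simpa using haP
  have hva : 0 < v a := hsingle a hua
  set t := u a / v a
  have ht : t ≤ 0 := div_nonpos_of_nonpos_of_nonneg hua hva.le
  have hφ : ∑ b, (u b - t * v b) * Q b ≤ 0 := by
    have : ∑ b, (u b - t * v b) * Q b = ∑ b, u b * Q b - t * ∑ b, v b * Q b := by
      simp only [sub_mul, sum_sub_distrib, mul_sum, mul_assoc]
    rw [this]
    linarith [mul_nonneg_of_nonpos_of_nonpos ht hv]
  have hφv : ∀ b, 0 < v b → 0 ≤ u b - t * v b := by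
    intro b hvb
    rcases le_or_gt (u b) 0 with hub | hub
    · have := (le_div_iff₀ hvb).1 (hmin b (by simpa using hub))
      linarith
    · linarith [mul_nonpos_of_nonpos_of_nonneg ht hvb.le]
  obtain ⟨b, hφb, hvb⟩ := exists_nonpos_and_nonpos_of_nonneg_of_pos hQ0 hQ hφ hv hφv
  have hcross : v a * u b ≤ u a * v b := by
    have : v a * u b ≤ v a * (t * v b) := mul_le_mul_of_nonneg_left (by linarith) hva.le
    rwa [show v a * (t * v b) = u a * v b by simp only [t]; field_simp] at this
  obtain ⟨q, hq0, hq1, hqu, hqv⟩ := exists_convex_comb_nonpos_of_mul_le_mul hva hvb hcross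
  exact ⟨a, b, q, hq0, hq1, hqu, hqv⟩

end WeightedSums

theorem two_point_compression_finite_general
    {A : Type*} [Fintype A]
    (Q : A → ℝ) (hQ0 : ∀ a, 0 ≤ Q a) (hQ1 : ∑ a, Q a = 1)
    (f g : A → ℝ) :
    ∃ a₁ a₂ : A, ∃ q : ℝ, 0 ≤ q ∧ q ≤ 1 ∧
      q * f a₁ + (1 - q) * f a₂ ≤ ∑ a, f a * Q a ∧
      q * g a₁ + (1 - q) * g a₂ ≤ ∑ a, g a * Q a := by
  have centred : ∀ h : A → ℝ, ∑ a, (h a - ∑ b, h b * Q b) * Q a ≤ 0 := fun h => by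
    simp only [sub_mul, sum_sub_distrib, ← mul_sum, hQ1, mul_one, sub_self, le_refl]
  obtain ⟨a₁, a₂, q, hq0, hq1, hf, hg⟩ :=
    exists_two_point_convex_comb_nonpos hQ0 (hQ1 ▸ one_pos) (centred f) (centred g)
  exact ⟨a₁, a₂, q, hq0, hq1, by linarith, by linarith⟩

/-- Finite version of Proposition 1 (Lemma 1 of Dong and Van Roy). -/
theorem two_point_compression_finite
    {A : Type*} [Fintype A] [Nonempty A]
    (Q : A → ℝ) (hQ0 : ∀ a, 0 ≤ Q a) (hQ1 : ∑ a, Q a = 1)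
    (f g : A → ℝ) (hf0 : ∀ a, 0 ≤ f a) (hg0 : ∀ a, 0 ≤ g a) :
    ∃ a₁ a₂ : A, ∃ q : ℝ, 0 ≤ q ∧ q ≤ 1 ∧
      q * f a₁ + (1 - q) * f a₂ ≤ ∑ a, f a * Q a ∧
      q * g a₁ + (1 - q) * g a₂ ≤ ∑ a, g a * Q a :=
  two_point_compression_finite_general Q hQ0 hQ1 f g
end

section
/- Let $\bar{F} = \int f \, d\mathbb{Q}$ and $\bar{G} = \int g \, d\mathbb{Q}$ for nonnegative integrable $f,g$ on a probability space $(\mathcal{A}, \mathbb{Q}$). Define $\mathcal{A}_f = \{a : f(a) \le \bar{F}\}$ and $\mathcal{A}_g = \{a : g(a) \le \bar{G}\}$. If $\mathcal{A}_f \cap \mathcal{A}_g = \emptyset$, then there exists a pair $(a_1, a_2) \in \mathcal{A}_f \times \mathcal{A}_g$ such that $f(a_2) g(a_1) - \bar{F}(g(a_1) - g(a_2)) \le \bar{G}(f(a_2) - f(a_1)) + f(a_1) g(a_2)$. -/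
/-!
Write `X = {f ≤ F̄}` and `Y = {g ≤ Ḡ}`. The inequality rearranges to
`(f a₂ - F̄) (g a₁ - Ḡ) ≤ (F̄ - f a₁) (Ḡ - g a₂)`. Since `f - F̄` has mean zero, its integral over
any set is at most its integral over `{f > F̄}`, which equals `∫_X (F̄ - f)`; likewise for `g`.
This bounds the product of the integrals of the two sides over `X × Y`, and both `X` and `Y` have
positive measure, so a first moment argument in each variable produces the pair.
-/

open MeasureTheory

section

variable {α : Type*} [MeasurableSpace α] {μ : Measure α}

theorem exists_mem_nonpos_of_setIntegral_nonpos {s : Set α} {h : α → ℝ}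
    (hμ : μ s ≠ 0) (hμ' : μ s ≠ ⊤) (hh : IntegrableOn h s μ) (hint : ∫ a in s, h a ∂μ ≤ 0) :
    ∃ a ∈ s, h a ≤ 0 := by
  obtain ⟨a, ha, hle⟩ := exists_le_setAverage hμ hμ' hh
  refine ⟨a, ha, hle.trans ?_⟩
  rw [setAverage_eq]
  exact smul_nonpos_of_nonneg_of_nonpos (by positivity) hint

theorem exists_mem_mul_le_mul_of_setIntegral_mul_le {s t : Set α}
    (hs : μ s ≠ 0) (hs' : μ s ≠ ⊤) (ht : μ t ≠ 0) (ht' : μ t ≠ ⊤) {f₁ g₁ f₂ g₂ : α → ℝ}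
    (hf₁ : IntegrableOn f₁ s μ) (hg₁ : IntegrableOn g₁ s μ)
    (hf₂ : IntegrableOn f₂ t μ) (hg₂ : IntegrableOn g₂ t μ)
    (h : (∫ a in t, f₂ a ∂μ) * (∫ a in s, g₁ a ∂μ) ≤
      (∫ a in s, f₁ a ∂μ) * (∫ a in t, g₂ a ∂μ)) :
    ∃ a₁ ∈ s, ∃ a₂ ∈ t, f₂ a₂ * g₁ a₁ ≤ f₁ a₁ * g₂ a₂ := by
  set I := ∫ a in s, f₁ a ∂μ
  set J := ∫ a in s, g₁ a ∂μ
  obtain ⟨a₂, ha₂, h₂⟩ : ∃ a₂ ∈ t, f₂ a₂ * J - I * g₂ a₂ ≤ 0 := by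
    refine exists_mem_nonpos_of_setIntegral_nonpos ht ht'
      ((hf₂.mul_const J).sub (hg₂.const_mul I)) ?_
    rw [integral_sub (hf₂.mul_const J) (hg₂.const_mul I), integral_mul_const, integral_const_mul]
    linarith
  obtain ⟨a₁, ha₁, h₁⟩ : ∃ a₁ ∈ s, f₂ a₂ * g₁ a₁ - f₁ a₁ * g₂ a₂ ≤ 0 := by
    refine exists_mem_nonpos_of_setIntegral_nonpos hs hs'
      ((hg₁.const_mul (f₂ a₂)).sub (hf₁.mul_const (g₂ a₂))) ?_
    rw [integral_sub (hg₁.const_mul _) (hf₁.mul_const _), integral_const_mul, integral_mul_const]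
    exact h₂
  exact ⟨a₁, ha₁, a₂, ha₂, sub_nonpos.1 h₁⟩

theorem setIntegral_le_setIntegral_pos {f : α → ℝ} (hf : Integrable f μ) (s : Set α) :
    ∫ a in s, f a ∂μ ≤ ∫ a in {a | 0 < f a}, f a ∂μ := by
  have hP : NullMeasurableSet {a | 0 < f a} μ := hf.aemeasurable.nullMeasurable measurableSet_Ioi
  have hout : ∫ a in s \ {a | 0 < f a}, f a ∂μ ≤ 0 := by
    refine setIntegral_nonpos_of_ae_restrict <| ae_restrict_of_ae_restrict_of_subset
      (Set.sdiff_subset_compl _ _) ((ae_restrict_mem₀ hP.compl).mono fun _ ha => not_lt.1 ha)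
  have hin : ∫ a in s ∩ {a | 0 < f a}, f a ∂μ ≤ ∫ a in {a | 0 < f a}, f a ∂μ :=
    setIntegral_mono_set hf.integrableOn
      ((ae_restrict_mem₀ hP).mono fun _ ha => ha.le) Set.inter_subset_right.eventuallyLE
  rw [← integral_inter_add_sdiff₀ hP hf.integrableOn]
  linarith

theorem setIntegral_sub_integral_le [IsProbabilityMeasure μ] {f : α → ℝ} (hf : Integrable f μ)
    (s : Set α) :
    ∫ a in s, (f a - ∫ b, f b ∂μ) ∂μ ≤ ∫ a in {a | f a ≤ ∫ b, f b ∂μ}, (∫ b, f b ∂μ - f a) ∂μ := by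
  set F := ∫ b, f b ∂μ
  have hfF : Integrable (fun a => f a - F) μ := hf.sub (integrable_const F)
  have hX : NullMeasurableSet {a | f a ≤ F} μ := hf.aemeasurable.nullMeasurable measurableSet_Iic
  calc ∫ a in s, (f a - F) ∂μ
      ≤ ∫ a in {a | 0 < f a - F}, (f a - F) ∂μ := setIntegral_le_setIntegral_pos hfF s
    _ = ∫ a in {a | f a ≤ F}ᶜ, (f a - F) ∂μ := by
        congr 2; ext a; simp
    _ = ∫ a in {a | f a ≤ F}, (F - f a) ∂μ := by
        simp_rw [setIntegral_compl₀ hX hfF, integral_sub hf (integrable_const F), ← neg_sub (f _) F,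
          integral_neg]
        simp [F]

end

theorem exists_pair_product_inequality_general
    {A : Type*} [MeasurableSpace A]
    (Q : Measure A) [IsProbabilityMeasure Q]
    (f g : A → ℝ)
    (hf : Integrable f Q) (hg : Integrable g Q)
    (hdisj : {a | f a ≤ ∫ a, f a ∂Q} ∩ {a | g a ≤ ∫ a, g a ∂Q} = ∅) :
    ∃ a₁ ∈ {a | f a ≤ ∫ a, f a ∂Q}, ∃ a₂ ∈ {a | g a ≤ ∫ a, g a ∂Q},
      f a₂ * g a₁ - (∫ a, f a ∂Q) * (g a₁ - g a₂) ≤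
        (∫ a, g a ∂Q) * (f a₂ - f a₁) + f a₁ * g a₂ := by
  set F := ∫ a, f a ∂Q
  set G := ∫ a, g a ∂Q
  have hX : NullMeasurableSet {a | f a ≤ F} Q := hf.aemeasurable.nullMeasurable measurableSet_Iic
  have hfX : 0 ≤ ∫ a in {a | f a ≤ F}, (F - f a) ∂Q :=
    setIntegral_nonneg_of_ae_restrict <| (ae_restrict_mem₀ hX).mono fun _ ha => sub_nonneg.2 ha
  have hgX : 0 ≤ ∫ a in {a | f a ≤ F}, (g a - G) ∂Q :=
    setIntegral_nonneg_of_ae_restrict <| (ae_restrict_mem₀ hX).mono fun a ha =>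
      sub_nonneg.2 <| not_lt.1 fun hlt => Set.eq_empty_iff_forall_notMem.1 hdisj a ⟨ha, hlt.le⟩
  obtain ⟨a₁, ha₁, a₂, ha₂, h⟩ := exists_mem_mul_le_mul_of_setIntegral_mul_le
    (f₁ := fun a => F - f a) (g₁ := fun a => g a - G) (f₂ := fun a => f a - F)
    (g₂ := fun a => G - g a)
    (measure_le_integral_pos hf).ne' (measure_ne_top _ _)
    (measure_le_integral_pos hg).ne' (measure_ne_top _ _)
    ((integrable_const F).sub hf).integrableOn (hg.sub (integrable_const G)).integrableOn
    (hf.sub (integrable_const F)).integrableOn ((integrable_const G).sub hg).integrableOn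
    (mul_le_mul (setIntegral_sub_integral_le hf _) (setIntegral_sub_integral_le hg _) hgX hfX)
  exact ⟨a₁, ha₁, a₂, ha₂, by linear_combination h⟩

/-- Key step in the proof of Proposition 1: if the sets of below-average points
of `f` and `g` are disjoint, some pair across them satisfies the product inequality. -/
theorem exists_pair_product_inequality
    {A : Type*} [MeasurableSpace A]
    (Q : Measure A) [IsProbabilityMeasure Q]
    (f g : A → ℝ) (hf0 : ∀ a, 0 ≤ f a) (hg0 : ∀ a, 0 ≤ g a)
    (hf : Integrable f Q) (hg : Integrable g Q)
    (hdisj : {a | f a ≤ ∫ a, f a ∂Q} ∩ {a | g a ≤ ∫ a, g a ∂Q} = ∅) :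
    ∃ a₁ ∈ {a | f a ≤ ∫ a, f a ∂Q}, ∃ a₂ ∈ {a | g a ≤ ∫ a, g a ∂Q},
      f a₂ * g a₁ - (∫ a, f a ∂Q) * (g a₁ - g a₂) ≤
        (∫ a, g a ∂Q) * (f a₂ - f a₁) + f a₁ * g a₂ :=
  exists_pair_product_inequality_general Q f g hf hg hdisj
end
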